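/- Let K : ℝ → ℝ be an L-Lipschitz integrable kernel, and let X, X̃ be real random variables with X = X̃ + W, where X̃ has bounded density p̃ (bound p̄). Then for b > 0, |E[K((x−X)/b)·K((x−X̃)/b)] − E[K²((x−X̃)/b)]| ≤ L · (E|W| / b) · b · p̄ · ∫|K(y)| dy. -/

import Mathlib

open MeasureTheory ProbabilityTheory Filter

/-! Lipschitz continuity bounds the difference of the two integrands by
`(L / b) |W| |K ((x - X̃) / b)|`. Independence factors the expectation of this bound into
`(L / b) E|W| · E|K ((x - X̃) / b)|`, and the density bound gives
`E|K ((x - X̃) / b)| ≤ p̄ ∫ |K ((x - y) / b)| dy = p̄ b ∫ |K|`. All integrands are integrable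
because an integrable Lipschitz function on `ℝ` is bounded. -/

theorem ofReal_integral_le_lintegral_ofReal {α : Type*} [MeasurableSpace α]
    {μ : Measure α} (f : α → ℝ) :
    ENNReal.ofReal (∫ a, f a ∂μ) ≤ ∫⁻ a, ENNReal.ofReal (f a) ∂μ := by
  by_cases hf : Integrable f μ
  · rw [integral_eq_lintegral_pos_part_sub_lintegral_neg_part hf]
    exact (ENNReal.ofReal_le_ofReal (sub_le_self _ ENNReal.toReal_nonneg)).trans
      ENNReal.ofReal_toReal_le
  · simp [integral_undef hf]

theorem LipschitzWith.abs_le_of_integrable {K : ℝ → ℝ} {L : NNReal} (hlip : LipschitzWith L K)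
    (hK : Integrable K) (y : ℝ) : |K y| ≤ L + (∫ t, |K t|) / 2 := by
  have hnear : ∀ t ∈ Set.Icc (y - 1) (y + 1), |K y| - L ≤ |K t| := by
    intro t ht
    have hdist : |y - t| ≤ 1 := abs_sub_le_iff.mpr ⟨by linarith [ht.1], by linarith [ht.2]⟩
    have := hlip.dist_le_mul y t
    rw [Real.dist_eq, Real.dist_eq] at this
    nlinarith [abs_sub_abs_le_abs_sub (K y) (K t), L.coe_nonneg]
  have hmass : 2 * (|K y| - L) ≤ ∫ t, |K t| := calc
    2 * (|K y| - L) = ∫ _ in Set.Icc (y - 1) (y + 1), (|K y| - L) := by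
      rw [setIntegral_const, Real.volume_real_Icc_of_le (by linarith), smul_eq_mul]
      ring
    _ ≤ ∫ t in Set.Icc (y - 1) (y + 1), |K t| :=
        setIntegral_mono_on (integrableOn_const measure_Icc_lt_top.ne) hK.abs.integrableOn
          measurableSet_Icc hnear
    _ ≤ ∫ t, |K t| := setIntegral_le_integral hK.abs (.of_forall fun t => abs_nonneg _)
  linarith

theorem integral_comp_sub_div {E : Type*} [NormedAddCommGroup E] [NormedSpace ℝ E]
    (f : ℝ → E) (x b : ℝ) : ∫ y, f ((x - y) / b) = |b| • ∫ y, f y := by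
  rw [integral_sub_left_eq_self (fun u => f (u / b)), Measure.integral_comp_div]

section Density

variable {Ω α : Type*} [MeasurableSpace Ω] [MeasurableSpace α] {μ : Measure Ω} {ν : Measure α}
  {X : Ω → α} {p : α → ℝ} {c : ℝ}

theorem map_le_smul_of_density_le (hX : Measurable X) (hp : ∀ y, p y ≤ c)
    (hdens : ∀ s, MeasurableSet s → μ (X ⁻¹' s) = ENNReal.ofReal (∫ y in s, p y ∂ν)) :
    μ.map X ≤ ENNReal.ofReal c • ν := by
  refine Measure.le_iff.mpr fun s hs => ?_
  calc μ.map X s = ENNReal.ofReal (∫ y in s, p y ∂ν) := by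
        rw [Measure.map_apply hX hs, hdens s hs]
    _ ≤ ∫⁻ y in s, ENNReal.ofReal (p y) ∂ν := ofReal_integral_le_lintegral_ofReal p
    _ ≤ ∫⁻ _ in s, ENNReal.ofReal c ∂ν :=
        lintegral_mono fun y => ENNReal.ofReal_le_ofReal (hp y)
    _ = (ENNReal.ofReal c • ν) s := by rw [setLIntegral_const, Measure.smul_apply, smul_eq_mul]

theorem integral_comp_le_of_density_le [NeZero μ] (hX : Measurable X) (hp : ∀ y, p y ≤ c)
    (hdens : ∀ s, MeasurableSet s → μ (X ⁻¹' s) = ENNReal.ofReal (∫ y in s, p y ∂ν))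
    {f : α → ℝ} (hf : Measurable f) (hf0 : 0 ≤ f) (hfi : Integrable f ν) :
    ∫ ω, f (X ω) ∂μ ≤ c * ∫ y, f y ∂ν := by
  have hle := map_le_smul_of_density_le hX hp hdens
  have hc : 0 ≤ c := by
    by_contra! hc
    rw [ENNReal.ofReal_of_nonpos hc.le, zero_smul] at hle
    exact (Measure.map_ne_zero_iff hX.aemeasurable).mpr (NeZero.ne μ)
      (le_antisymm hle (Measure.zero_le _))
  calc ∫ ω, f (X ω) ∂μ = ∫ y, f y ∂μ.map X :=
        (integral_map hX.aemeasurable hf.aestronglyMeasurable).symm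
    _ ≤ ∫ y, f y ∂(ENNReal.ofReal c • ν) :=
        integral_mono_measure hle (.of_forall hf0) (hfi.smul_measure ENNReal.ofReal_ne_top)
    _ = c * ∫ y, f y ∂ν := by rw [integral_smul_measure, ENNReal.toReal_ofReal hc, smul_eq_mul]

end Density

theorem LipschitzWith.abs_integral_mul_sub_integral_sq_le {Ω : Type*} [MeasurableSpace Ω]
    {μ : Measure Ω} [IsFiniteMeasure μ] {K : ℝ → ℝ} {L : NNReal} (hlip : LipschitzWith L K)
    (hK : Integrable K) {U V : Ω → ℝ} (hU : AEMeasurable U μ) (hV : AEMeasurable V μ)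
    (hUV : Integrable (U - V) μ) :
    |(∫ ω, K (U ω) * K (V ω) ∂μ) - ∫ ω, K (V ω) ^ 2 ∂μ|
      ≤ L * ∫ ω, |U ω - V ω| * |K (V ω)| ∂μ := by
  have hC (y : ℝ) : ‖K y‖ ≤ L + (∫ t, |K t|) / 2 := hlip.abs_le_of_integrable hK y
  have hKU : AEStronglyMeasurable (fun ω => K (U ω)) μ :=
    hlip.continuous.comp_aestronglyMeasurable hU.aestronglyMeasurable
  have hKV : AEStronglyMeasurable (fun ω => K (V ω)) μ :=
    hlip.continuous.comp_aestronglyMeasurable hV.aestronglyMeasurable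
  have hKVi : Integrable (fun ω => K (V ω)) μ := .of_bound hKV _ (.of_forall fun ω => hC _)
  have hF : Integrable (fun ω => K (U ω) * K (V ω)) μ :=
    hKVi.bdd_mul hKU (.of_forall fun ω => hC _)
  have hG : Integrable (fun ω => K (V ω) ^ 2) μ := by
    simpa only [sq] using hKVi.bdd_mul hKV (.of_forall fun ω => hC _)
  have hR : Integrable (fun ω => |U ω - V ω| * |K (V ω)|) μ :=
    hUV.abs.mul_bdd hKV.norm (.of_forall fun ω => by simpa using hC (V ω))
  have hpointwise (ω : Ω) :
      |K (U ω) * K (V ω) - K (V ω) ^ 2| ≤ L * (|U ω - V ω| * |K (V ω)|) := by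
    calc |K (U ω) * K (V ω) - K (V ω) ^ 2| = |K (U ω) - K (V ω)| * |K (V ω)| := by
          rw [← abs_mul]; ring_nf
      _ ≤ L * |U ω - V ω| * |K (V ω)| := by
          gcongr; simpa [Real.dist_eq] using hlip.dist_le_mul (U ω) (V ω)
      _ = L * (|U ω - V ω| * |K (V ω)|) := mul_assoc _ _ _
  calc _ = |∫ ω, (K (U ω) * K (V ω) - K (V ω) ^ 2) ∂μ| := by rw [integral_sub hF hG]
    _ ≤ ∫ ω, |K (U ω) * K (V ω) - K (V ω) ^ 2| ∂μ := abs_integral_le_integral_abs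
    _ ≤ ∫ ω, L * (|U ω - V ω| * |K (V ω)|) ∂μ :=
        integral_mono (hF.sub hG).abs (hR.const_mul _) hpointwise
    _ = _ := integral_const_mul _ _

/-- For an `L`-Lipschitz integrable kernel `K` and `X = X̃ + W` with `X̃` having density
bounded by `pbar`:
`|E[K((x-X)/b) K((x-X̃)/b)] - E[K²((x-X̃)/b)]| ≤ L (E|W|/b) b pbar ∫|K|`. -/
theorem stmt14 {Ω : Type*} [MeasurableSpace Ω] (μ : Measure Ω) [IsProbabilityMeasure μ]
    (Xt W : Ω → ℝ) (hXt : Measurable Xt) (hW : Measurable W)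
    (hindep : IndepFun Xt W μ) (hWint : Integrable W μ)
    (K : ℝ → ℝ) (L : NNReal) (hlip : LipschitzWith L K) (hKint : Integrable K)
    (pt : ℝ → ℝ) (pbar : ℝ) (hpt : ∀ y, pt y ≤ pbar)
    (hdens : ∀ s : Set ℝ, MeasurableSet s →
      μ (Xt ⁻¹' s) = ENNReal.ofReal (∫ y in s, pt y))
    (b : ℝ) (hb : 0 < b) (x : ℝ) :
    |(∫ ω, K ((x - (Xt ω + W ω)) / b) * K ((x - Xt ω) / b) ∂μ)
        - ∫ ω, (K ((x - Xt ω) / b)) ^ 2 ∂μ|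
      ≤ (L : ℝ) * ((∫ ω, |W ω| ∂μ) / b) * b * pbar * ∫ y, |K y| := by
  have hKc : Continuous K := hlip.continuous
  have hshift (ω : Ω) : |(x - (Xt ω + W ω)) / b - (x - Xt ω) / b| = |W ω| / b := by
    rw [show (x - (Xt ω + W ω)) / b - (x - Xt ω) / b = -W ω / b by ring, abs_div, abs_neg,
      abs_of_pos hb]
  have hind : IndepFun (fun ω => |W ω| / b) (fun ω => |K ((x - Xt ω) / b)|) μ :=
    hindep.symm.comp (φ := fun w => |w| / b) (ψ := fun y => |K ((x - y) / b)|)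
      (by fun_prop) (by fun_prop)
  have hdensity : ∫ ω, |K ((x - Xt ω) / b)| ∂μ ≤ pbar * (b * ∫ y, |K y|) := by
    have := integral_comp_le_of_density_le hXt hpt hdens (f := fun y => |K ((x - y) / b)|)
      (by fun_prop) (fun y => abs_nonneg _) ((hKint.abs.comp_div hb.ne').comp_sub_left x)
    rwa [integral_comp_sub_div (fun u => |K u|), abs_of_pos hb, smul_eq_mul] at this
  calc _ ≤ L * ∫ ω, |(x - (Xt ω + W ω)) / b - (x - Xt ω) / b| * |K ((x - Xt ω) / b)| ∂μ :=
        hlip.abs_integral_mul_sub_integral_sq_le hKint (by fun_prop) (by fun_prop)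
          ((hWint.neg.div_const b).congr
            (.of_forall fun ω => by simp only [Pi.sub_apply, Pi.neg_apply]; ring))
    _ = L * ((∫ ω, |W ω| ∂μ) / b * ∫ ω, |K ((x - Xt ω) / b)| ∂μ) := by
        simp_rw [hshift]
        rw [hind.integral_fun_mul_eq_mul_integral (by fun_prop) (by fun_prop), integral_div]
    _ ≤ L * ((∫ ω, |W ω| ∂μ) / b * (pbar * (b * ∫ y, |K y|))) := by gcongr
    _ = _ := by ring
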